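/- The subdifferential of g** is: ∂g**(x) = [−τ, τ] if x = 0; {sign(x)·τ} if 0 < |x| < μ; sign(x)·[τ, κ] ∩ ℝ if |x| = μ; and ∂h(x) if |x| > μ, where κ = sup{v ≥ 0 : v ∈ ∂h(μ)} when μ < +∞. -/

import Mathlib

noncomputable section

open Set
open scoped Classical

/-- Convex (Fenchel) conjugate of an extended-real-valued function on `ℝ`. -/
def conj (f : ℝ → EReal) (v : ℝ) : EReal := ⨆ x : ℝ, ((v * x : ℝ) : EReal) - f x

/-- Convex subdifferential of an extended-real-valued function on `ℝ`. -/
def subdiff (f : ℝ → EReal) (x : ℝ) : Set ℝ :=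
  {d : ℝ | ∀ y : ℝ, f x + ((d * (y - x) : ℝ) : EReal) ≤ f y}

/-- Convexity of an extended-real-valued function on `ℝ`. -/
def EConvexOn (f : ℝ → EReal) : Prop :=
  ∀ x y a b : ℝ, 0 ≤ a → 0 ≤ b → a + b = 1 →
    f (a * x + b * y) ≤ (a : EReal) * f x + (b : EReal) * f y

/-- The ℓ₀-penalized regularizer `g(x) = λ‖x‖₀ + h(x)`. -/
def gfun (lam : ℝ) (h : ℝ → EReal) (x : ℝ) : EReal :=
  (if x = 0 then (0 : EReal) else (lam : EReal)) + h x

/-- The parameter `τ = sup {v ≥ 0 : h*(v) ≤ λ}` (as a real number). -/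
def tau (lam : ℝ) (h : ℝ → EReal) : ℝ :=
  sSup {v : ℝ | 0 ≤ v ∧ conj h v ≤ (lam : EReal)}

/-- The parameter `μ = sup {x ≥ 0 : x ∈ ∂h*(τ)}` if `∂h*(τ) ≠ ∅`, else `+∞`. -/
def mu (lam : ℝ) (h : ℝ → EReal) : EReal :=
  if (subdiff (conj h) (tau lam h)).Nonempty then
    sSup ((fun x : ℝ => (x : EReal)) '' {x : ℝ | 0 ≤ x ∧ x ∈ subdiff (conj h) (tau lam h)})
  else ⊤

/-- The parameter `β = sup {v ≥ 0 : v ∈ dom h*}`. -/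
def beta (h : ℝ → EReal) : EReal :=
  sSup ((fun v : ℝ => (v : EReal)) '' {v : ℝ | 0 ≤ v ∧ conj h v ≠ ⊤})

/-- The parameter `κ = sup {v ≥ 0 : v ∈ ∂h(μ)}` if `μ < +∞`, else `+∞`. -/
def kappa (lam : ℝ) (h : ℝ → EReal) : EReal :=
  if mu lam h ≠ ⊤ then
    sSup ((fun v : ℝ => (v : EReal)) '' {v : ℝ | 0 ≤ v ∧ v ∈ subdiff h (mu lam h).toReal})
  else ⊤

/-- The set of minimizers of `u ↦ ½(u − v)² + γ·ω(u)`, i.e. `prox_{γω}(v)`. -/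
def proxSet (γ : ℝ) (ω : ℝ → EReal) (v : ℝ) : Set ℝ :=
  {u : ℝ | ∀ w : ℝ,
    ((2⁻¹ * (u - v) ^ 2 : ℝ) : EReal) + (γ : EReal) * ω u ≤
      ((2⁻¹ * (w - v) ^ 2 : ℝ) : EReal) + (γ : EReal) * ω w}

/-!
Everything is read off the conjugate `φ = g* = max 0 (h* - λ)`. Since `g*** = g*`, Fenchel–Young
turns `d ∈ ∂g**(x)` into `x ∈ ∂φ(d)`. On `[-τ, τ] = {h* ≤ λ}` the function `φ` vanishes; beyond
`τ` it is `h* - λ` if `h*(τ) = λ` and `+∞` otherwise (a convex function is continuous inside its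
domain). For `x > 0` this forces `d ≥ τ`. If `x < μ`, then `x` is smaller than every slope of
`h* - λ` to the right of `τ`, so `d = τ`. If `x ≥ μ`, then `x ∈ ∂φ(d)` means `d ≥ τ` and
`x ∈ ∂h*(d)`, that is `d ∈ ∂h(x)` by Fenchel–Moreau for `h`, which we prove by separating a
point from the epigraph. Evenness takes care of `x < 0`.
-/

lemma coe_toReal_of_nonneg {a : EReal} (ha : 0 ≤ a) (ha' : a ≠ ⊤) : (a.toReal : EReal) = a :=
  EReal.coe_toReal ha' (ne_bot_of_le_ne_bot EReal.zero_ne_bot ha)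

lemma exists_coe_eq_of_nonneg {a : EReal} (ha : 0 ≤ a) (ha' : a ≠ ⊤) : ∃ p : ℝ, a = p :=
  ⟨a.toReal, (coe_toReal_of_nonneg ha ha').symm⟩

lemma EReal.coe_sub_le_comm {a : ℝ} {b c : EReal} :
    (a : EReal) - b ≤ c ↔ (a : EReal) - c ≤ b := by
  induction b <;> induction c <;> simp [← EReal.coe_sub]
  constructor <;> intro <;> linarith

lemma Function.Even.apply_abs {β : Type*} {f : ℝ → β} (hf : f.Even) (y : ℝ) : f |y| = f y := by
  rcases abs_choice y with hy | hy <;> rw [hy]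
  exact hf y

section Conjugate

variable {f g : ℝ → EReal}

lemma le_conj (f : ℝ → EReal) (v x : ℝ) : ((v * x : ℝ) : EReal) - f x ≤ conj f v :=
  le_iSup (fun x => ((v * x : ℝ) : EReal) - f x) x

lemma conj_le {v : ℝ} {c : EReal} (hc : ∀ x : ℝ, ((v * x : ℝ) : EReal) - f x ≤ c) :
    conj f v ≤ c :=
  iSup_le hc

lemma conj_anti (hfg : ∀ x, f x ≤ g x) (v : ℝ) : conj g v ≤ conj f v :=
  conj_le fun x => (EReal.sub_le_sub le_rfl (hfg x)).trans (le_conj f v x)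

lemma conj_conj_le (f : ℝ → EReal) (x : ℝ) : conj (conj f) x ≤ f x :=
  conj_le fun v => EReal.coe_sub_le_comm.1 (mul_comm x v ▸ le_conj f v x)

lemma conj_conj_conj (f : ℝ → EReal) : conj (conj (conj f)) = conj f :=
  funext fun v => (conj_conj_le _ v).antisymm <| conj_le fun x =>
    (EReal.sub_le_sub le_rfl (conj_conj_le f x)).trans (le_conj _ v x)

lemma even_conj (hf : f.Even) : (conj f).Even := by
  have key : ∀ v, conj f v ≤ conj f (-v) := fun v => conj_le fun x => by
    simpa [hf x] using le_conj f (-v) (-x)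
  exact fun v => le_antisymm (by simpa using key (-v)) (key v)

lemma conj_nonneg (hf0 : f 0 = 0) (v : ℝ) : 0 ≤ conj f v := by
  simpa [hf0] using le_conj f v 0

lemma conj_zero (hf : ∀ x, 0 ≤ f x) (hf0 : f 0 = 0) : conj f 0 = 0 :=
  (conj_le fun x => by simpa using hf x).antisymm (conj_nonneg hf0 0)

lemma lowerSemicontinuous_conj (f : ℝ → EReal) : LowerSemicontinuous (conj f) := by
  refine lowerSemicontinuous_iSup fun x => Continuous.lowerSemicontinuous ?_
  induction f x with
  | bot => simp only [EReal.coe_sub_bot]; exact continuous_const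
  | top => simp only [EReal.sub_top]; exact continuous_const
  | coe r => simp_rw [← EReal.coe_sub]; exact continuous_coe_real_ereal.comp (by fun_prop)

lemma econvexOn_conj (hf : ∀ x, 0 ≤ f x) : EConvexOn (conj f) := by
  intro u w a b ha hb hab
  refine conj_le fun x => ?_
  rcases eq_or_ne (f x) ⊤ with hx | hx
  · simp [hx]
  have hslope : ∀ v, (((v * x - (f x).toReal : ℝ)) : EReal) ≤ conj f v := fun v => by
    have := le_conj f v x
    rwa [← coe_toReal_of_nonneg (hf x) hx, ← EReal.coe_sub] at this
  calc ((a * u + b * w) * x : ℝ) - f x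
      = ((a : ℝ) : EReal) * ((u * x - (f x).toReal : ℝ) : EReal)
        + ((b : ℝ) : EReal) * ((w * x - (f x).toReal : ℝ) : EReal) := by
        rw [← coe_toReal_of_nonneg (hf x) hx, ← EReal.coe_sub, ← EReal.coe_mul, ← EReal.coe_mul,
          ← EReal.coe_add, EReal.toReal_coe]
        congr 1
        linear_combination (f x).toReal * hab
    _ ≤ (a : EReal) * conj f u + (b : EReal) * conj f w :=
        add_le_add (mul_le_mul_of_nonneg_left (hslope u) (EReal.coe_nonneg.2 ha))
          (mul_le_mul_of_nonneg_left (hslope w) (EReal.coe_nonneg.2 hb))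

lemma coe_le_conj_conj_of_affine_le {a b : ℝ} (hab : ∀ y, ((a * y + b : ℝ) : EReal) ≤ f y)
    (x : ℝ) : ((a * x + b : ℝ) : EReal) ≤ conj (conj f) x := by
  have hconj : conj f a ≤ ((-b : ℝ) : EReal) := conj_le fun y =>
    EReal.coe_sub_le_comm.1 <| by rw [← EReal.coe_sub, sub_neg_eq_add]; exact hab y
  calc ((a * x + b : ℝ) : EReal) = ((x * a : ℝ) : EReal) - ((-b : ℝ) : EReal) := by
        rw [← EReal.coe_sub]; ring_nf
    _ ≤ ((x * a : ℝ) : EReal) - conj f a := EReal.sub_le_sub le_rfl hconj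
    _ ≤ conj (conj f) x := le_conj _ x a

end Conjugate

section Subdifferential

variable {f : ℝ → EReal} {x d : ℝ}

lemma ne_top_of_mem_subdiff (hd : d ∈ subdiff f x) {y : ℝ} (hy : f y ≠ ⊤) : f x ≠ ⊤ := by
  intro hx
  have := hd y
  rw [hx, EReal.top_add_of_ne_bot (EReal.coe_ne_bot _), top_le_iff] at this
  exact hy this

lemma mem_subdiff_iff (hf : ∀ y, 0 ≤ f y) (hx : f x ≠ ⊤) :
    d ∈ subdiff f x ↔ ∀ y, f y ≠ ⊤ → (f x).toReal + d * (y - x) ≤ (f y).toReal := by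
  refine forall_congr' fun y => ?_
  rcases eq_or_ne (f y) ⊤ with hy | hy
  · simp [hy]
  · rw [← coe_toReal_of_nonneg (hf x) hx, ← coe_toReal_of_nonneg (hf y) hy, ← EReal.coe_add,
      EReal.coe_le_coe_iff]
    simp

lemma toReal_add_mul_le_of_mem_subdiff (hf : ∀ y, 0 ≤ f y) (hd : d ∈ subdiff f x) {y : ℝ}
    (hy : f y ≠ ⊤) : (f x).toReal + d * (y - x) ≤ (f y).toReal :=
  (mem_subdiff_iff hf (ne_top_of_mem_subdiff hd hy)).1 hd y hy

lemma neg_mem_subdiff_neg (heven : f.Even) (hd : d ∈ subdiff f x) : -d ∈ subdiff f (-x) := by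
  intro y
  rw [heven, ← heven y, show -d * (y - -x) = d * (-y - x) by ring]
  exact hd (-y)

lemma mem_subdiff_iff_sign_mul_mem_abs (heven : f.Even) (hx : x ≠ 0) :
    d ∈ subdiff f x ↔ Real.sign x * d ∈ subdiff f |x| := by
  rcases hx.lt_or_gt with hx | hx
  · rw [Real.sign_of_neg hx, abs_of_neg hx, neg_one_mul]
    exact ⟨neg_mem_subdiff_neg heven, fun h => by simpa using neg_mem_subdiff_neg heven h⟩
  · rw [Real.sign_of_pos hx, abs_of_pos hx, one_mul]

lemma sign_mul_eq_iff (hx : x ≠ 0) {t : ℝ} : Real.sign x * d = t ↔ d = Real.sign x * t := by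
  rcases hx.lt_or_gt with hx | hx
  · simp only [Real.sign_of_neg hx, neg_one_mul]
    constructor <;> intro <;> linarith
  · simp only [Real.sign_of_pos hx, one_mul]

lemma sub_mul_sub_nonneg_of_mem_subdiff (hf : ∀ y, 0 ≤ f y) {x₁ x₂ d₁ d₂ : ℝ}
    (h₁ : d₁ ∈ subdiff f x₁) (h₂ : d₂ ∈ subdiff f x₂) (hx₁ : f x₁ ≠ ⊤) :
    0 ≤ (d₁ - d₂) * (x₁ - x₂) := by
  have hx₂ := ne_top_of_mem_subdiff h₂ hx₁
  have := toReal_add_mul_le_of_mem_subdiff hf h₁ hx₂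
  have := toReal_add_mul_le_of_mem_subdiff hf h₂ hx₁
  nlinarith

lemma exists_nonneg_mem_subdiff (hf : ∀ y, 0 ≤ f y) (heven : f.Even) (hx : 0 ≤ x)
    (hfx : f x ≠ ⊤) (hne : (subdiff f x).Nonempty) : ∃ t, 0 ≤ t ∧ t ∈ subdiff f x := by
  obtain ⟨t, ht⟩ := hne
  rcases le_or_gt 0 t with ht0 | ht0
  · exact ⟨t, ht0, ht⟩
  have hneg := neg_mem_subdiff_neg heven ht
  have hx0 : x = 0 := by
    nlinarith [sub_mul_sub_nonneg_of_mem_subdiff hf ht hneg hfx]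
  subst hx0
  exact ⟨-t, by linarith, by simpa using hneg⟩

lemma mem_subdiff_iff_conj_le (hf : ∀ y, 0 ≤ f y) (hx : f x ≠ ⊤) :
    d ∈ subdiff f x ↔ conj f d ≤ ((d * x - (f x).toReal : ℝ) : EReal) := by
  rw [mem_subdiff_iff hf hx]
  refine ⟨fun H => conj_le fun y => ?_, fun H y hy => ?_⟩
  · rcases eq_or_ne (f y) ⊤ with hy | hy
    · simp [hy]
    · rw [← coe_toReal_of_nonneg (hf y) hy, ← EReal.coe_sub, EReal.coe_le_coe_iff]
      linarith [H y hy]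
  · have := (le_conj f d y).trans H
    rw [← coe_toReal_of_nonneg (hf y) hy, ← EReal.coe_sub, EReal.coe_le_coe_iff] at this
    linarith

lemma subdiff_conj_conj (hf : ∀ y, 0 ≤ f y) (hf0 : f 0 = 0) (hx : conj (conj f) x ≠ ⊤) :
    subdiff (conj (conj f)) x = {d | x ∈ subdiff (conj f) d} := by
  have hf' : ∀ v, 0 ≤ conj f v := conj_nonneg hf0
  have hf'' : ∀ y, 0 ≤ conj (conj f) y := conj_nonneg (conj_zero hf hf0)
  ext d
  rw [mem_ofPred_eq, mem_subdiff_iff_conj_le hf'' hx, conj_conj_conj]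
  rcases eq_or_ne (conj f d) ⊤ with hd | hd
  · simp only [hd, top_le_iff, EReal.coe_ne_top, false_iff]
    exact fun h => ne_top_of_mem_subdiff h (y := 0) (by simp [conj_zero hf hf0]) hd
  obtain ⟨p, hp⟩ := exists_coe_eq_of_nonneg (hf' d) hd
  obtain ⟨q, hq⟩ := exists_coe_eq_of_nonneg (hf'' x) hx
  rw [mem_subdiff_iff_conj_le hf' hd, hp, hq, EReal.toReal_coe, EReal.toReal_coe,
    EReal.coe_le_coe_iff, EReal.coe_le_coe_iff]
  constructor <;> intro <;> linarith

end Subdifferential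

def supNonnegSubdiff (f : ℝ → EReal) (x : ℝ) : EReal :=
  sSup ((fun v : ℝ => (v : EReal)) '' {v : ℝ | 0 ≤ v ∧ v ∈ subdiff f x})

section SupNonnegSubdiff

variable {f : ℝ → EReal} {x : ℝ}

lemma coe_le_supNonnegSubdiff {t : ℝ} (ht0 : 0 ≤ t) (ht : t ∈ subdiff f x) :
    (t : EReal) ≤ supNonnegSubdiff f x :=
  le_sSup ⟨t, ⟨ht0, ht⟩, rfl⟩

lemma supNonnegSubdiff_le {s : EReal} (hs : ∀ t, 0 ≤ t → t ∈ subdiff f x → (t : EReal) ≤ s) :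
    supNonnegSubdiff f x ≤ s :=
  sSup_le fun _ ⟨t, ⟨ht0, ht⟩, hts⟩ => hts ▸ hs t ht0 ht

lemma mem_subdiff_iff_coe_le_supNonnegSubdiff (hf : ∀ y, 0 ≤ f y) (hfx : f x ≠ ⊤) {a d : ℝ}
    (ha : a ∈ subdiff f x) (ha0 : 0 ≤ a) (had : a ≤ d) :
    d ∈ subdiff f x ↔ (d : EReal) ≤ supNonnegSubdiff f x := by
  refine ⟨fun hd => coe_le_supNonnegSubdiff (ha0.trans had) hd, fun hd => ?_⟩
  refine (mem_subdiff_iff hf hfx).2 fun y hy => ?_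
  rcases le_or_gt y x with hyx | hxy
  · nlinarith [toReal_add_mul_le_of_mem_subdiff hf ha hy]
  · have hslope : supNonnegSubdiff f x ≤ (((f y).toReal - (f x).toReal) / (y - x) : ℝ) :=
      supNonnegSubdiff_le fun t _ ht => EReal.coe_le_coe_iff.2 <| by
        rw [le_div_iff₀ (sub_pos.2 hxy)]
        linarith [toReal_add_mul_le_of_mem_subdiff hf ht hy]
    have := EReal.coe_le_coe_iff.1 (hd.trans hslope)
    rw [le_div_iff₀ (sub_pos.2 hxy)] at this
    linarith

end SupNonnegSubdiff

namespace EConvexOn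

variable {f : ℝ → EReal}

lemma le_coe_toReal_combo (hconv : EConvexOn f) (hf : ∀ y, 0 ≤ f y) {x y a b : ℝ}
    (hx : f x ≠ ⊤) (hy : f y ≠ ⊤) (ha : 0 ≤ a) (hb : 0 ≤ b) (hab : a + b = 1) :
    f (a * x + b * y) ≤ ((a * (f x).toReal + b * (f y).toReal : ℝ) : EReal) := by
  have := hconv x y a b ha hb hab
  rwa [← coe_toReal_of_nonneg (hf x) hx, ← coe_toReal_of_nonneg (hf y) hy, ← EReal.coe_mul,
    ← EReal.coe_mul, ← EReal.coe_add] at this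

lemma convexOn_toReal (hconv : EConvexOn f) (hf : ∀ y, 0 ≤ f y) :
    ConvexOn ℝ {y | f y ≠ ⊤} fun y => (f y).toReal := by
  refine ⟨fun x hx y hy a b ha hb hab => ?_, fun x hx y hy a b ha hb hab => ?_⟩
  · exact ne_top_of_le_ne_top (EReal.coe_ne_top _) (hconv.le_coe_toReal_combo hf hx hy ha hb hab)
  · have := hconv.le_coe_toReal_combo hf hx hy ha hb hab
    rw [← EReal.toReal_coe (_ + _)]
    exact EReal.toReal_le_toReal this (ne_bot_of_le_ne_bot EReal.zero_ne_bot (hf _))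
      (EReal.coe_ne_top _)

lemma monotoneOn_of_even (hconv : EConvexOn f) (hf : ∀ y, 0 ≤ f y) (heven : f.Even) :
    MonotoneOn f (Ici 0) := by
  intro u (hu : 0 ≤ u) w (hw : 0 ≤ w) huw
  rcases eq_or_ne (f w) ⊤ with hw' | hw'
  · exact hw' ▸ le_top
  rcases hw.eq_or_lt with rfl | hw0
  · rw [le_antisymm huw hu]
  have hmid := hconv.le_coe_toReal_combo hf hw' (show f (-w) ≠ ⊤ by rwa [heven])
    (a := (w + u) / (2 * w)) (b := (w - u) / (2 * w)) (by positivity)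
    (div_nonneg (by linarith) (by positivity)) (by field_simp; ring)
  rw [heven, ← add_mul, ← add_div, show w + u + (w - u) = 2 * w by ring,
    div_self (by positivity), one_mul, coe_toReal_of_nonneg (hf w) hw'] at hmid
  convert hmid using 2
  field_simp
  ring

lemma mem_interior_dom (hconv : EConvexOn f) (hf : ∀ y, 0 ≤ f y) (heven : f.Even) {t e : ℝ}
    (ht : 0 ≤ t) (hte : t < e) (he : f e ≠ ⊤) : t ∈ interior {y | f y ≠ ⊤} := by
  refine mem_interior.2 ⟨Ioo (-e) e, fun y hy => ?_, isOpen_Ioo, by constructor <;> linarith⟩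
  rw [mem_ofPred_eq, ← heven.apply_abs]
  exact ne_top_of_le_ne_top he <| hconv.monotoneOn_of_even hf heven (abs_nonneg y)
    (ht.trans hte.le) (abs_le.2 ⟨hy.1.le, hy.2.le⟩)

/-- The right derivative of `f` at an interior point of its domain is a subgradient. -/
lemma subdiff_nonempty (hconv : EConvexOn f) (hf : ∀ y, 0 ≤ f y) {t : ℝ}
    (ht : t ∈ interior {y | f y ≠ ⊤}) : (subdiff f t).Nonempty := by
  have hF := hconv.convexOn_toReal hf
  refine ⟨derivWithin (fun y => (f y).toReal) (Ioi t) t,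
    (mem_subdiff_iff hf (interior_subset ht)).2 fun y hy => ?_⟩
  rcases lt_trichotomy y t with hyt | rfl | hty
  · have hslope := (hF.slope_le_leftDeriv_of_mem_interior hy ht hyt).trans
      (hF.leftDeriv_le_rightDeriv_of_mem_interior ht)
    rw [slope_def_field, div_le_iff₀ (sub_pos.2 hyt)] at hslope
    linarith
  · simp
  · have hslope := hF.rightDeriv_le_slope_of_mem_interior ht hy hty
    rw [slope_def_field, le_div_iff₀ (sub_pos.2 hty)] at hslope
    linarith


lemma isClosed_epigraph (hlsc : LowerSemicontinuous f) :
    IsClosed {p : ℝ × ℝ | f p.1 ≤ p.2} :=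
  hlsc.isClosed_epigraph.preimage (continuous_id.prodMap continuous_coe_real_ereal)

lemma convex_epigraph (hconv : EConvexOn f) : Convex ℝ {p : ℝ × ℝ | f p.1 ≤ p.2} := by
  intro p hp q hq a b ha hb hab
  calc f (a * p.1 + b * q.1) ≤ (a : EReal) * f p.1 + (b : EReal) * f q.1 :=
        hconv p.1 q.1 a b ha hb hab
    _ ≤ (a : EReal) * p.2 + (b : EReal) * q.2 :=
        add_le_add (mul_le_mul_of_nonneg_left hp (EReal.coe_nonneg.2 ha))
          (mul_le_mul_of_nonneg_left hq (EReal.coe_nonneg.2 hb))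
    _ = ((a • p + b • q).2 : ℝ) := by simp

/-- Separate `(x, c)` from the epigraph by a line `α y + β r = u`. As `(0, r)` lies in the
epigraph for `r ≥ 0`, `β ≥ 0`; as `f ≥ 0`, `y ↦ k (u - α y)` with `k = c / (u - α x)` is an
affine minorant of `f` taking the value `c` at `x`. -/
lemma exists_affine_le_of_lt (hconv : EConvexOn f) (hf : ∀ y, 0 ≤ f y) (hf0 : f 0 = 0)
    (hlsc : LowerSemicontinuous f) {x c : ℝ} (hc : (c : EReal) < f x) :
    ∃ a b : ℝ, (∀ y, ((a * y + b : ℝ) : EReal) ≤ f y) ∧ c ≤ a * x + b := by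
  rcases le_or_gt c 0 with hc0 | hc0
  · exact ⟨0, 0, fun y => by simpa using hf y, by simpa using hc0⟩
  obtain ⟨L, u, hLx, hLE⟩ := geometric_hahn_banach_point_closed hconv.convex_epigraph
    (isClosed_epigraph hlsc) (show (x, c) ∉ {p : ℝ × ℝ | f p.1 ≤ p.2} from not_le.2 hc)
  set α := L (1, 0)
  set β := L (0, 1)
  have hL : ∀ y r : ℝ, L (y, r) = α * y + β * r := fun y r => by
    rw [show ((y, r) : ℝ × ℝ) = y • ((1 : ℝ), (0 : ℝ)) + r • ((0 : ℝ), (1 : ℝ)) by simp, map_add,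
      map_smul, map_smul, smul_eq_mul, smul_eq_mul]
    ring
  have hβ : 0 ≤ β := by
    by_contra! hβ
    have := hLE (0, |u| / -β) (by simpa [hf0] using div_nonneg (abs_nonneg u) (neg_nonneg.2 hβ.le))
    rw [hL, show β * (|u| / -β) = -|u| by field_simp [hβ.ne]] at this
    linarith [neg_abs_le u]
  rw [hL] at hLx
  have hgap : 0 < u - α * x := by nlinarith
  set k := c / (u - α * x)
  have hk0 : 0 ≤ k := by positivity
  have hkβ : k * β ≤ 1 := by
    rw [div_mul_eq_mul_div, div_le_one hgap]
    linarith
  refine ⟨-(k * α), k * u, fun y => ?_, ?_⟩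
  · rcases eq_or_ne (f y) ⊤ with hy | hy
    · simp [hy]
    have hr0 : 0 ≤ (f y).toReal := EReal.toReal_nonneg (hf y)
    have hyE := hLE (y, (f y).toReal) (by simp [coe_toReal_of_nonneg (hf y) hy])
    rw [hL] at hyE
    rw [← coe_toReal_of_nonneg (hf y) hy, EReal.coe_le_coe_iff]
    nlinarith [mul_le_mul_of_nonneg_left hyE.le hk0, mul_nonneg (sub_nonneg.2 hkβ) hr0]
  · have : k * (u - α * x) = c := div_mul_cancel₀ c hgap.ne'
    linarith

theorem conj_conj_eq_self (hconv : EConvexOn f) (hf : ∀ y, 0 ≤ f y) (hf0 : f 0 = 0)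
    (hlsc : LowerSemicontinuous f) : conj (conj f) = f :=
  funext fun x => (conj_conj_le f x).antisymm <| EReal.ge_of_forall_gt_iff_ge.1 fun c hc => by
    obtain ⟨a, b, hab, hcx⟩ := hconv.exists_affine_le_of_lt hf hf0 hlsc hc
    exact (EReal.coe_le_coe_iff.2 hcx).trans (coe_le_conj_conj_of_affine_le hab x)

lemma mem_subdiff_iff_mem_subdiff_conj (hconv : EConvexOn f) (hf : ∀ y, 0 ≤ f y) (hf0 : f 0 = 0)
    (hlsc : LowerSemicontinuous f) {x d : ℝ} (hx : f x ≠ ⊤) :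
    d ∈ subdiff f x ↔ x ∈ subdiff (conj f) d := by
  have hFM := hconv.conj_conj_eq_self hf hf0 hlsc
  have := subdiff_conj_conj hf hf0 (x := x) (by rwa [hFM])
  rw [hFM] at this
  rw [this, mem_ofPred_eq]

end EConvexOn

section Regularizer

variable {lam : ℝ} {h : ℝ → EReal}

lemma gfun_zero : gfun lam h 0 = h 0 := by simp [gfun]

lemma gfun_of_ne_zero {x : ℝ} (hx : x ≠ 0) : gfun lam h x = lam + h x := by simp [gfun, hx]

lemma le_gfun (hlam : 0 ≤ lam) (x : ℝ) : h x ≤ gfun lam h x := by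
  rcases eq_or_ne x 0 with rfl | hx
  · rw [gfun_zero]
  · rw [gfun_of_ne_zero hx]
    exact le_add_of_nonneg_left (EReal.coe_nonneg.2 hlam)

lemma even_gfun (heven : h.Even) : (gfun lam h).Even := fun x => by
  simp [gfun, heven x]

lemma conj_gfun (hlam : 0 ≤ lam) (h0 : h 0 = 0) (hge : ∀ x, 0 ≤ h x) (v : ℝ) :
    conj (gfun lam h) v = max 0 (conj h v - lam) := by
  refine le_antisymm (conj_le fun x => ?_) (max_le ?_ ?_)
  · rcases eq_or_ne x 0 with rfl | hx
    · simp [gfun_zero, h0]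
    rcases eq_or_ne (h x) ⊤ with hhx | hhx
    · simp [gfun_of_ne_zero hx, hhx]
    obtain ⟨p, hp⟩ := exists_coe_eq_of_nonneg (hge x) hhx
    have := le_conj h v x
    rw [hp, ← EReal.coe_sub] at this
    rw [gfun_of_ne_zero hx, hp, ← EReal.coe_add, ← EReal.coe_sub]
    calc ((v * x - (lam + p) : ℝ) : EReal) = ((v * x - p : ℝ) : EReal) - lam := by
          rw [← EReal.coe_sub]; ring_nf
      _ ≤ max 0 (conj h v - lam) := le_max_of_le_right (EReal.sub_le_sub this le_rfl)
  · exact conj_nonneg (by rw [gfun_zero, h0]) v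
  · refine EReal.sub_le_of_le_add (conj_le fun x => ?_)
    rcases eq_or_ne x 0 with rfl | hx
    · simpa [h0] using add_nonneg (conj_nonneg (by rw [gfun_zero, h0]) v) (EReal.coe_nonneg.2 hlam)
    rcases eq_or_ne (h x) ⊤ with hhx | hhx
    · simp [hhx]
    obtain ⟨p, hp⟩ := exists_coe_eq_of_nonneg (hge x) hhx
    have := le_conj (gfun lam h) v x
    rw [gfun_of_ne_zero hx, hp, ← EReal.coe_add, ← EReal.coe_sub] at this
    rw [hp, ← EReal.coe_sub]
    calc ((v * x - p : ℝ) : EReal) = ((v * x - (lam + p) : ℝ) : EReal) + lam := by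
          rw [← EReal.coe_add]; ring_nf
      _ ≤ conj (gfun lam h) v + lam := add_le_add this le_rfl

lemma conj_gfun_eq_top_iff (hlam : 0 ≤ lam) (h0 : h 0 = 0) (hge : ∀ x, 0 ≤ h x) {v : ℝ} :
    conj (gfun lam h) v = ⊤ ↔ conj h v = ⊤ := by
  rw [conj_gfun hlam h0 hge]
  induction conj h v <;> simp [← EReal.coe_sub]

lemma toReal_conj_gfun (hlam : 0 ≤ lam) (h0 : h 0 = 0) (hge : ∀ x, 0 ≤ h x) {v : ℝ}
    (hv : conj h v ≠ ⊤) : (conj (gfun lam h) v).toReal = max 0 ((conj h v).toReal - lam) := by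
  obtain ⟨p, hp⟩ := exists_coe_eq_of_nonneg (conj_nonneg h0 v) hv
  rw [conj_gfun hlam h0 hge, hp, ← EReal.coe_sub, EReal.toReal_coe, ← EReal.coe_zero,
    ← EReal.coe_strictMono.monotone.map_max, EReal.toReal_coe]

lemma conj_gfun_eq_zero_iff (hlam : 0 ≤ lam) (h0 : h 0 = 0) (hge : ∀ x, 0 ≤ h x) {v : ℝ} :
    conj (gfun lam h) v = 0 ↔ conj h v ≤ lam := by
  rw [conj_gfun hlam h0 hge, max_eq_left_iff, EReal.sub_nonpos]

end Regularizer

section Tau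

variable {lam : ℝ} {h : ℝ → EReal}

lemma bddAbove_tau_set (hge : ∀ x, 0 ≤ h x) (hdom : ∃ x : ℝ, 0 < x ∧ h x ≠ ⊤) :
    BddAbove {v : ℝ | 0 ≤ v ∧ conj h v ≤ (lam : EReal)} := by
  obtain ⟨x, hx, hhx⟩ := hdom
  obtain ⟨p, hp⟩ := exists_coe_eq_of_nonneg (hge x) hhx
  refine ⟨(lam + p) / x, fun v ⟨_, hv⟩ => ?_⟩
  have := (le_conj h v x).trans hv
  rw [hp, ← EReal.coe_sub, EReal.coe_le_coe_iff] at this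
  rw [le_div_iff₀ hx]
  linarith

lemma tau_mem (hlam : 0 ≤ lam) (h0 : h 0 = 0) (hge : ∀ x, 0 ≤ h x)
    (hdom : ∃ x : ℝ, 0 < x ∧ h x ≠ ⊤) :
    tau lam h ∈ {v : ℝ | 0 ≤ v ∧ conj h v ≤ (lam : EReal)} :=
  IsClosed.csSup_mem (isClosed_Ici.inter ((lowerSemicontinuous_conj h).isClosed_preimage _))
    ⟨0, le_rfl, by rw [conj_zero hge h0]; exact EReal.coe_nonneg.2 hlam⟩ (bddAbove_tau_set hge hdom)

lemma conj_le_iff_abs_le_tau (hlam : 0 ≤ lam) (h0 : h 0 = 0) (hge : ∀ x, 0 ≤ h x)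
    (hdom : ∃ x : ℝ, 0 < x ∧ h x ≠ ⊤) (heven : h.Even) {v : ℝ} :
    conj h v ≤ lam ↔ |v| ≤ tau lam h := by
  have hτ := tau_mem hlam h0 hge hdom
  rw [← (even_conj heven).apply_abs]
  refine ⟨fun hv => le_csSup (bddAbove_tau_set hge hdom) ⟨abs_nonneg v, hv⟩, fun hv => ?_⟩
  exact ((econvexOn_conj hge).monotoneOn_of_even (conj_nonneg h0) (even_conj heven)
    (abs_nonneg v) hτ.1 hv).trans hτ.2

lemma lt_conj_of_tau_lt (hlam : 0 ≤ lam) (h0 : h 0 = 0) (hge : ∀ x, 0 ≤ h x)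
    (hdom : ∃ x : ℝ, 0 < x ∧ h x ≠ ⊤) (heven : h.Even) {v : ℝ} (hv : tau lam h < v) :
    (lam : EReal) < conj h v :=
  not_le.1 fun h' => (hv.trans_le (le_abs_self v)).not_ge
    ((conj_le_iff_abs_le_tau hlam h0 hge hdom heven).1 h')

/-- `h*` is continuous at `τ` whenever it is finite beyond `τ`, so it cannot stay below `λ` at `τ`
while exceeding `λ` just after it. -/
lemma conj_tau_eq_of_lt (hlam : 0 ≤ lam) (h0 : h 0 = 0) (hge : ∀ x, 0 ≤ h x)
    (hdom : ∃ x : ℝ, 0 < x ∧ h x ≠ ⊤) (heven : h.Even) {e : ℝ} (he : tau lam h < e)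
    (hψe : conj h e ≠ ⊤) : conj h (tau lam h) = lam := by
  have hτ := tau_mem hlam h0 hge hdom
  have hψ := econvexOn_conj hge
  have hint := hψ.mem_interior_dom (conj_nonneg h0) (even_conj heven) hτ.1 he hψe
  have hcont : ContinuousAt (fun v => (conj h v).toReal) (tau lam h) :=
    (hψ.convexOn_toReal (conj_nonneg h0)).continuousOn_interior.continuousAt
      (isOpen_interior.mem_nhds hint)
  by_contra hne
  have hlt : (conj h (tau lam h)).toReal < lam := by
    rw [← EReal.coe_lt_coe_iff, coe_toReal_of_nonneg (conj_nonneg h0 _) (interior_subset hint)]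
    exact lt_of_le_of_ne hτ.2 hne
  obtain ⟨v, ⟨hv, hvdom⟩, hτv⟩ := (((hcont.eventually (gt_mem_nhds hlt)).and
    (isOpen_interior.mem_nhds hint)).filter_mono nhdsWithin_le_nhds |>.and
    (self_mem_nhdsWithin (s := Ioi (tau lam h)))).exists
  refine (lt_conj_of_tau_lt hlam h0 hge hdom heven hτv).not_ge ?_
  rw [← coe_toReal_of_nonneg (conj_nonneg h0 v) (interior_subset hvdom)]
  exact EReal.coe_le_coe_iff.2 hv.le

end Tau

section Mu

variable {lam : ℝ} {h : ℝ → EReal}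

lemma mu_eq_supNonnegSubdiff (hne : (subdiff (conj h) (tau lam h)).Nonempty) :
    mu lam h = supNonnegSubdiff (conj h) (tau lam h) := by
  rw [mu, if_pos hne]
  rfl

lemma subdiff_nonempty_of_mu_ne_top (hμ : mu lam h ≠ ⊤) :
    (subdiff (conj h) (tau lam h)).Nonempty := by
  by_contra hne
  exact hμ (by rw [mu, if_neg hne])

lemma conj_tau_ne_top (hlam : 0 ≤ lam) (h0 : h 0 = 0) (hge : ∀ x, 0 ≤ h x)
    (hdom : ∃ x : ℝ, 0 < x ∧ h x ≠ ⊤) : conj h (tau lam h) ≠ ⊤ :=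
  ne_top_of_le_ne_top (EReal.coe_ne_top lam) (tau_mem hlam h0 hge hdom).2

lemma exists_nonneg_mem_subdiff_conj_tau (hlam : 0 ≤ lam) (h0 : h 0 = 0) (hge : ∀ x, 0 ≤ h x)
    (hdom : ∃ x : ℝ, 0 < x ∧ h x ≠ ⊤) (heven : h.Even)
    (hne : (subdiff (conj h) (tau lam h)).Nonempty) :
    ∃ t, 0 ≤ t ∧ t ∈ subdiff (conj h) (tau lam h) :=
  exists_nonneg_mem_subdiff (conj_nonneg h0) (even_conj heven) (tau_mem hlam h0 hge hdom).1
    (conj_tau_ne_top hlam h0 hge hdom) hne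

lemma mu_nonneg (hlam : 0 ≤ lam) (h0 : h 0 = 0) (hge : ∀ x, 0 ≤ h x)
    (hdom : ∃ x : ℝ, 0 < x ∧ h x ≠ ⊤) (heven : h.Even) : 0 ≤ mu lam h := by
  by_cases hne : (subdiff (conj h) (tau lam h)).Nonempty
  · obtain ⟨t, ht0, ht⟩ := exists_nonneg_mem_subdiff_conj_tau hlam h0 hge hdom heven hne
    rw [mu_eq_supNonnegSubdiff hne]
    exact (EReal.coe_nonneg.2 ht0).trans (coe_le_supNonnegSubdiff ht0 ht)
  · rw [mu, if_neg hne]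
    exact le_top

/-- If `h*(τ) < λ`, then `h* = ⊤` beyond `τ`, and every large enough slope is a subgradient
at `τ`. -/
lemma conj_tau_eq_of_mu_ne_top (hlam : 0 ≤ lam) (h0 : h 0 = 0) (hge : ∀ x, 0 ≤ h x)
    (hdom : ∃ x : ℝ, 0 < x ∧ h x ≠ ⊤) (heven : h.Even) (hμ : mu lam h ≠ ⊤) :
    conj h (tau lam h) = lam := by
  have hne := subdiff_nonempty_of_mu_ne_top hμ
  obtain ⟨t, ht0, ht⟩ := exists_nonneg_mem_subdiff_conj_tau hlam h0 hge hdom heven hne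
  by_contra hψτ
  refine hμ ((EReal.eq_top_iff_forall_lt _).2 fun y => ?_)
  have hmem : max t (y + 1) ∈ subdiff (conj h) (tau lam h) := by
    refine (mem_subdiff_iff (conj_nonneg h0) (conj_tau_ne_top hlam h0 hge hdom)).2 fun e he => ?_
    rcases le_or_gt e (tau lam h) with heτ | heτ
    · nlinarith [toReal_add_mul_le_of_mem_subdiff (conj_nonneg h0) ht he,
        mul_nonpos_of_nonneg_of_nonpos (sub_nonneg.2 (le_max_left t (y + 1))) (sub_nonpos.2 heτ)]
    · exact absurd (conj_tau_eq_of_lt hlam h0 hge hdom heven heτ he) hψτ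
  rw [mu_eq_supNonnegSubdiff hne]
  exact (EReal.coe_lt_coe_iff.2 (by linarith [le_max_right t (y + 1)])).trans_le
    (coe_le_supNonnegSubdiff (ht0.trans (le_max_left _ _)) hmem)

lemma coe_toReal_mu (hlam : 0 ≤ lam) (h0 : h 0 = 0) (hge : ∀ x, 0 ≤ h x)
    (hdom : ∃ x : ℝ, 0 < x ∧ h x ≠ ⊤) (heven : h.Even) (hμ : mu lam h ≠ ⊤) :
    ((mu lam h).toReal : EReal) = mu lam h :=
  coe_toReal_of_nonneg (mu_nonneg hlam h0 hge hdom heven) hμ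

lemma toReal_mu_mem_subdiff (hlam : 0 ≤ lam) (h0 : h 0 = 0) (hge : ∀ x, 0 ≤ h x)
    (hdom : ∃ x : ℝ, 0 < x ∧ h x ≠ ⊤) (heven : h.Even) (hμ : mu lam h ≠ ⊤) :
    (mu lam h).toReal ∈ subdiff (conj h) (tau lam h) := by
  have hne := subdiff_nonempty_of_mu_ne_top hμ
  obtain ⟨t, ht0, ht⟩ := exists_nonneg_mem_subdiff_conj_tau hlam h0 hge hdom heven hne
  have hμ' : ((mu lam h).toReal : EReal) = supNonnegSubdiff (conj h) (tau lam h) := by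
    rw [coe_toReal_mu hlam h0 hge hdom heven hμ, mu_eq_supNonnegSubdiff hne]
  refine (mem_subdiff_iff_coe_le_supNonnegSubdiff (conj_nonneg h0)
    (conj_tau_ne_top hlam h0 hge hdom) ht ht0 ?_).2 hμ'.le
  rw [← EReal.coe_le_coe_iff, hμ']
  exact coe_le_supNonnegSubdiff ht0 ht

lemma mu_le_of_toReal_conj_sub_le (hlam : 0 ≤ lam) (h0 : h 0 = 0) (hge : ∀ x, 0 ≤ h x)
    (hdom : ∃ x : ℝ, 0 < x ∧ h x ≠ ⊤) (heven : h.Even) {e s : ℝ} (he : tau lam h < e)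
    (hψe : conj h e ≠ ⊤) (hs : (conj h e).toReal - lam ≤ s * (e - tau lam h)) :
    mu lam h ≤ s := by
  have hψ := econvexOn_conj hge
  have hne := hψ.subdiff_nonempty (conj_nonneg h0) <| hψ.mem_interior_dom (conj_nonneg h0)
    (even_conj heven) (tau_mem hlam h0 hge hdom).1 he hψe
  rw [mu_eq_supNonnegSubdiff hne]
  refine supNonnegSubdiff_le fun t _ ht => EReal.coe_le_coe_iff.2 ?_
  have := toReal_add_mul_le_of_mem_subdiff (conj_nonneg h0) ht hψe
  rw [conj_tau_eq_of_lt hlam h0 hge hdom heven he hψe, EReal.toReal_coe] at this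
  nlinarith

lemma mu_ne_zero (hlam : 0 < lam) (h0 : h 0 = 0) (hge : ∀ x, 0 ≤ h x)
    (hdom : ∃ x : ℝ, 0 < x ∧ h x ≠ ⊤) (heven : h.Even) : mu lam h ≠ 0 := by
  intro hμ0
  have hμ : mu lam h ≠ ⊤ := hμ0 ▸ EReal.zero_ne_top
  have hmin := toReal_mu_mem_subdiff hlam.le h0 hge hdom heven hμ 0
  rw [hμ0, conj_zero hge h0, conj_tau_eq_of_mu_ne_top hlam.le h0 hge hdom heven hμ] at hmin
  simp only [EReal.toReal_zero, zero_mul, EReal.coe_zero, add_zero] at hmin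
  exact hlam.not_ge (EReal.coe_nonpos.1 hmin)

end Mu

section ConjGfun

variable {lam : ℝ} {h : ℝ → EReal}

lemma conj_gfun_nonneg (h0 : h 0 = 0) (v : ℝ) : 0 ≤ conj (gfun lam h) v :=
  conj_nonneg (by rw [gfun_zero, h0]) v

lemma conj_gfun_zero (hlam : 0 ≤ lam) (h0 : h 0 = 0) (hge : ∀ x, 0 ≤ h x) :
    conj (gfun lam h) 0 = 0 :=
  conj_zero (fun x => (hge x).trans (le_gfun hlam x)) (by rw [gfun_zero, h0])

lemma conj_gfun_tau (hlam : 0 ≤ lam) (h0 : h 0 = 0) (hge : ∀ x, 0 ≤ h x)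
    (hdom : ∃ x : ℝ, 0 < x ∧ h x ≠ ⊤) : conj (gfun lam h) (tau lam h) = 0 :=
  (conj_gfun_eq_zero_iff hlam h0 hge).2 (tau_mem hlam h0 hge hdom).2

lemma zero_mem_subdiff_conj_gfun_iff (hlam : 0 ≤ lam) (h0 : h 0 = 0) (hge : ∀ x, 0 ≤ h x)
    (hdom : ∃ x : ℝ, 0 < x ∧ h x ≠ ⊤) (heven : h.Even) {d : ℝ} :
    (0 : ℝ) ∈ subdiff (conj (gfun lam h)) d ↔ |d| ≤ tau lam h := by
  rw [← conj_le_iff_abs_le_tau hlam h0 hge hdom heven, ← conj_gfun_eq_zero_iff hlam h0 hge]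
  refine ⟨fun hd => le_antisymm ?_ (conj_gfun_nonneg h0 d), fun hd y => ?_⟩
  · simpa [conj_gfun_zero hlam h0 hge] using hd 0
  · simpa [hd] using conj_gfun_nonneg h0 y

lemma tau_le_of_mem_subdiff_conj_gfun (hlam : 0 ≤ lam) (h0 : h 0 = 0) (hge : ∀ x, 0 ≤ h x)
    (hdom : ∃ x : ℝ, 0 < x ∧ h x ≠ ⊤) (heven : h.Even) {x d : ℝ} (hx : 0 < x)
    (hd : x ∈ subdiff (conj (gfun lam h)) d) : tau lam h ≤ d := by
  have hφ := conj_gfun_nonneg (lam := lam) h0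
  have hφd : conj (gfun lam h) d ≠ ⊤ :=
    ne_top_of_mem_subdiff hd (y := 0) (by simp [conj_gfun_zero hlam h0 hge])
  have hd0 : 0 ≤ d := by
    nlinarith [sub_mul_sub_nonneg_of_mem_subdiff hφ hd
      (neg_mem_subdiff_neg (even_conj (even_gfun heven)) hd) hφd]
  by_contra! hdτ
  have hφd0 : conj (gfun lam h) d = 0 := (conj_gfun_eq_zero_iff hlam h0 hge).2 <|
    (conj_le_iff_abs_le_tau hlam h0 hge hdom heven).2 (by rw [abs_of_nonneg hd0]; exact hdτ.le)
  have := toReal_add_mul_le_of_mem_subdiff hφ hd (y := tau lam h)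
    (by simp [conj_gfun_tau hlam h0 hge hdom])
  rw [hφd0, conj_gfun_tau hlam h0 hge hdom, EReal.toReal_zero] at this
  nlinarith

lemma coe_mul_lt_conj_gfun_of_lt_mu (hlam : 0 ≤ lam) (h0 : h 0 = 0) (hge : ∀ x, 0 ≤ h x)
    (hdom : ∃ x : ℝ, 0 < x ∧ h x ≠ ⊤) (heven : h.Even) {x e : ℝ} (hxμ : (x : EReal) < mu lam h)
    (he : tau lam h < e) : ((x * (e - tau lam h) : ℝ) : EReal) < conj (gfun lam h) e := by
  by_contra! hle
  have hψe : conj h e ≠ ⊤ := fun hψe => EReal.coe_ne_top _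
    (top_le_iff.1 (((conj_gfun_eq_top_iff hlam h0 hge).2 hψe).symm.trans_le hle))
  refine hxμ.not_ge (mu_le_of_toReal_conj_sub_le hlam h0 hge hdom heven he hψe ?_)
  have := EReal.toReal_le_toReal hle (ne_bot_of_le_ne_bot EReal.zero_ne_bot
    (conj_gfun_nonneg h0 e)) (EReal.coe_ne_top _)
  rw [toReal_conj_gfun hlam h0 hge hψe, EReal.toReal_coe] at this
  exact (le_max_right _ _).trans this

lemma mem_subdiff_conj_gfun_iff_of_lt_mu (hlam : 0 ≤ lam) (h0 : h 0 = 0)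
    (hge : ∀ x, 0 ≤ h x) (hdom : ∃ x : ℝ, 0 < x ∧ h x ≠ ⊤) (heven : h.Even) {x d : ℝ}
    (hx : 0 < x) (hxμ : (x : EReal) < mu lam h) :
    x ∈ subdiff (conj (gfun lam h)) d ↔ d = tau lam h := by
  have hφ := conj_gfun_nonneg (lam := lam) h0
  have hφτ := conj_gfun_tau hlam h0 hge hdom
  constructor
  · intro hd
    refine ((tau_le_of_mem_subdiff_conj_gfun hlam h0 hge hdom heven hx hd).eq_or_lt.resolve_right
      fun hτd => ?_).symm
    have hφd := ne_top_of_mem_subdiff hd (y := 0) (by simp [conj_gfun_zero hlam h0 hge])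
    have := toReal_add_mul_le_of_mem_subdiff hφ hd (y := tau lam h) (by simp [hφτ])
    rw [hφτ, EReal.toReal_zero] at this
    refine (coe_mul_lt_conj_gfun_of_lt_mu hlam h0 hge hdom heven hxμ hτd).not_ge ?_
    rw [← coe_toReal_of_nonneg (hφ d) hφd, EReal.coe_le_coe_iff]
    linarith
  · rintro rfl
    refine (mem_subdiff_iff hφ (by simp [hφτ])).2 fun e he => ?_
    rw [hφτ, EReal.toReal_zero, zero_add]
    rcases le_or_gt e (tau lam h) with heτ | heτ
    · exact (mul_nonpos_of_nonneg_of_nonpos hx.le (sub_nonpos.2 heτ)).trans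
        (EReal.toReal_nonneg (hφ e))
    · have := coe_mul_lt_conj_gfun_of_lt_mu hlam h0 hge hdom heven hxμ heτ
      rw [← coe_toReal_of_nonneg (hφ e) he, EReal.coe_lt_coe_iff] at this
      exact this.le

lemma toReal_conj_gfun_of_tau_le (hlam : 0 ≤ lam) (h0 : h 0 = 0) (hge : ∀ x, 0 ≤ h x)
    (hdom : ∃ x : ℝ, 0 < x ∧ h x ≠ ⊤) (heven : h.Even) (hψτ : conj h (tau lam h) = lam)
    {d : ℝ} (hτd : tau lam h ≤ d) (hψd : conj h d ≠ ⊤) :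
    (conj (gfun lam h) d).toReal = (conj h d).toReal - lam := by
  have hτ0 := (tau_mem hlam h0 hge hdom).1
  have := (econvexOn_conj hge).monotoneOn_of_even (conj_nonneg h0) (even_conj heven) hτ0
    (hτ0.trans hτd) hτd
  rw [hψτ, ← coe_toReal_of_nonneg (conj_nonneg h0 d) hψd, EReal.coe_le_coe_iff] at this
  rw [toReal_conj_gfun hlam h0 hge hψd, max_eq_right (by linarith)]

lemma mem_subdiff_conj_gfun_of_mem_subdiff_conj (hlam : 0 ≤ lam) (h0 : h 0 = 0)
    (hge : ∀ x, 0 ≤ h x) (hdom : ∃ x : ℝ, 0 < x ∧ h x ≠ ⊤) (heven : h.Even)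
    (hψτ : conj h (tau lam h) = lam) {x d : ℝ} (hτd : tau lam h ≤ d)
    (hd : x ∈ subdiff (conj h) d) : x ∈ subdiff (conj (gfun lam h)) d := by
  have hψd := ne_top_of_mem_subdiff hd (y := 0) (by simp [conj_zero hge h0])
  have hφd : conj (gfun lam h) d ≠ ⊤ := (conj_gfun_eq_top_iff hlam h0 hge).not.2 hψd
  refine (mem_subdiff_iff (conj_gfun_nonneg h0) hφd).2 fun e hφe => ?_
  have hψe : conj h e ≠ ⊤ := (conj_gfun_eq_top_iff hlam h0 hge).not.1 hφe
  rw [toReal_conj_gfun_of_tau_le hlam h0 hge hdom heven hψτ hτd hψd,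
    toReal_conj_gfun hlam h0 hge hψe]
  linarith [toReal_add_mul_le_of_mem_subdiff (conj_nonneg h0) hd hψe,
    le_max_right 0 ((conj h e).toReal - lam)]

/-- Where `h*(e) < λ` we have `e ≤ τ`, and the subgradient inequality at `e` follows from the
one of `φ` at `τ` together with `μ ∈ ∂h*(τ)` and `μ ≤ x`. -/
lemma mem_subdiff_conj_of_mem_subdiff_conj_gfun (hlam : 0 ≤ lam) (h0 : h 0 = 0)
    (hge : ∀ x, 0 ≤ h x) (hdom : ∃ x : ℝ, 0 < x ∧ h x ≠ ⊤) (heven : h.Even) {x d : ℝ}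
    (hx : 0 < x) (hμx : mu lam h ≤ x) (hd : x ∈ subdiff (conj (gfun lam h)) d) :
    x ∈ subdiff (conj h) d := by
  have hμ : mu lam h ≠ ⊤ := ne_top_of_le_ne_top (EReal.coe_ne_top x) hμx
  have hψτ := conj_tau_eq_of_mu_ne_top hlam h0 hge hdom heven hμ
  have hMx : (mu lam h).toReal ≤ x := by
    rwa [← EReal.coe_le_coe_iff, coe_toReal_mu hlam h0 hge hdom heven hμ]
  have hφ := conj_gfun_nonneg (lam := lam) h0
  have hψ := conj_nonneg (f := h) h0
  have hτd := tau_le_of_mem_subdiff_conj_gfun hlam h0 hge hdom heven hx hd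
  have hψd : conj h d ≠ ⊤ := (conj_gfun_eq_top_iff hlam h0 hge).not.1 <|
    ne_top_of_mem_subdiff hd (y := 0) (by simp [conj_gfun_zero hlam h0 hge])
  have hφd := toReal_conj_gfun_of_tau_le hlam h0 hge hdom heven hψτ hτd hψd
  refine (mem_subdiff_iff hψ hψd).2 fun e hψe => ?_
  have hde := toReal_add_mul_le_of_mem_subdiff hφ hd ((conj_gfun_eq_top_iff hlam h0 hge).not.2 hψe)
  rw [hφd, toReal_conj_gfun hlam h0 hge hψe] at hde
  rcases le_or_gt lam (conj h e).toReal with hle | hlt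
  · rw [max_eq_right (by linarith)] at hde
    linarith
  have heτ : e ≤ tau lam h := (le_abs_self e).trans <|
    (conj_le_iff_abs_le_tau hlam h0 hge hdom heven).1 <| by
      rw [← coe_toReal_of_nonneg (hψ e) hψe]
      exact EReal.coe_le_coe_iff.2 hlt.le
  have hdτ := toReal_add_mul_le_of_mem_subdiff hφ hd (y := tau lam h)
    (by simp [conj_gfun_tau hlam h0 hge hdom])
  rw [hφd, conj_gfun_tau hlam h0 hge hdom, EReal.toReal_zero] at hdτ
  have hτe := toReal_add_mul_le_of_mem_subdiff hψ
    (toReal_mu_mem_subdiff hlam h0 hge hdom heven hμ) hψe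
  rw [hψτ, EReal.toReal_coe] at hτe
  nlinarith [mul_nonpos_of_nonneg_of_nonpos (sub_nonneg.2 hMx) (sub_nonpos.2 heτ)]

lemma mem_subdiff_conj_gfun_iff_of_mu_le (hlam : 0 ≤ lam) (h0 : h 0 = 0)
    (hge : ∀ x, 0 ≤ h x) (hdom : ∃ x : ℝ, 0 < x ∧ h x ≠ ⊤) (heven : h.Even) {x d : ℝ}
    (hx : 0 < x) (hμx : mu lam h ≤ x) :
    x ∈ subdiff (conj (gfun lam h)) d ↔ tau lam h ≤ d ∧ x ∈ subdiff (conj h) d :=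
  ⟨fun hd => ⟨tau_le_of_mem_subdiff_conj_gfun hlam h0 hge hdom heven hx hd,
      mem_subdiff_conj_of_mem_subdiff_conj_gfun hlam h0 hge hdom heven hx hμx hd⟩,
    fun ⟨hτd, hd⟩ => mem_subdiff_conj_gfun_of_mem_subdiff_conj hlam h0 hge hdom heven
      (conj_tau_eq_of_mu_ne_top hlam h0 hge hdom heven
        (ne_top_of_le_ne_top (EReal.coe_ne_top x) hμx)) hτd hd⟩

end ConjGfun

section Biconjugate

variable {lam : ℝ} {h : ℝ → EReal}

lemma subdiff_biconj_gfun_eq (hlam : 0 ≤ lam) (h0 : h 0 = 0) (hge : ∀ x, 0 ≤ h x) {x : ℝ}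
    (hx : conj (conj (gfun lam h)) x ≠ ⊤) :
    subdiff (conj (conj (gfun lam h))) x = {d | x ∈ subdiff (conj (gfun lam h)) d} :=
  subdiff_conj_conj (fun y => (hge y).trans (le_gfun hlam y)) (by rw [gfun_zero, h0]) hx

lemma ne_top_of_biconj_gfun_ne_top (hlam : 0 ≤ lam) (h0 : h 0 = 0) (hge : ∀ x, 0 ≤ h x)
    (hlsc : LowerSemicontinuous h) (hconv : EConvexOn h) {x : ℝ}
    (hx : conj (conj (gfun lam h)) x ≠ ⊤) : h x ≠ ⊤ := by
  have := ne_top_of_le_ne_top hx (conj_anti (conj_anti (le_gfun hlam)) x)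
  rwa [hconv.conj_conj_eq_self hge h0 hlsc] at this

lemma subdiff_biconj_gfun_zero (hlam : 0 ≤ lam) (h0 : h 0 = 0) (hge : ∀ x, 0 ≤ h x)
    (hdom : ∃ x : ℝ, 0 < x ∧ h x ≠ ⊤) (heven : h.Even) (hG0 : conj (conj (gfun lam h)) 0 ≠ ⊤) :
    subdiff (conj (conj (gfun lam h))) 0 = Icc (-tau lam h) (tau lam h) := by
  ext d
  rw [subdiff_biconj_gfun_eq hlam h0 hge hG0, mem_ofPred_eq,
    zero_mem_subdiff_conj_gfun_iff hlam h0 hge hdom heven, abs_le, mem_Icc]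

lemma subdiff_biconj_gfun_of_lt_mu (hlam : 0 ≤ lam) (h0 : h 0 = 0) (hge : ∀ x, 0 ≤ h x)
    (hdom : ∃ x : ℝ, 0 < x ∧ h x ≠ ⊤) (heven : h.Even) {x : ℝ} (hx : 0 < x)
    (hxμ : (x : EReal) < mu lam h) (hGx : conj (conj (gfun lam h)) x ≠ ⊤) :
    subdiff (conj (conj (gfun lam h))) x = {tau lam h} := by
  ext d
  rw [subdiff_biconj_gfun_eq hlam h0 hge hGx, mem_ofPred_eq,
    mem_subdiff_conj_gfun_iff_of_lt_mu hlam h0 hge hdom heven hx hxμ, mem_singleton_iff]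

lemma subdiff_biconj_gfun_of_mu_le (hlam : 0 ≤ lam) (h0 : h 0 = 0) (hge : ∀ x, 0 ≤ h x)
    (hlsc : LowerSemicontinuous h) (hconv : EConvexOn h) (hdom : ∃ x : ℝ, 0 < x ∧ h x ≠ ⊤)
    (heven : h.Even) {x : ℝ} (hx : 0 < x) (hμx : mu lam h ≤ x)
    (hGx : conj (conj (gfun lam h)) x ≠ ⊤) :
    subdiff (conj (conj (gfun lam h))) x = {d | tau lam h ≤ d ∧ d ∈ subdiff h x} := by
  ext d
  rw [subdiff_biconj_gfun_eq hlam h0 hge hGx, mem_ofPred_eq,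
    mem_subdiff_conj_gfun_iff_of_mu_le hlam h0 hge hdom heven hx hμx, mem_ofPred_eq,
    hconv.mem_subdiff_iff_mem_subdiff_conj hge h0 hlsc
      (ne_top_of_biconj_gfun_ne_top hlam h0 hge hlsc hconv hGx)]

lemma subdiff_biconj_gfun_of_eq_mu (hlam : 0 ≤ lam) (h0 : h 0 = 0) (hge : ∀ x, 0 ≤ h x)
    (hlsc : LowerSemicontinuous h) (hconv : EConvexOn h) (hdom : ∃ x : ℝ, 0 < x ∧ h x ≠ ⊤)
    (heven : h.Even) {x : ℝ} (hx : 0 < x) (hxμ : (x : EReal) = mu lam h)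
    (hGx : conj (conj (gfun lam h)) x ≠ ⊤) :
    subdiff (conj (conj (gfun lam h))) x = {d | tau lam h ≤ d ∧ (d : EReal) ≤ kappa lam h} := by
  have hμ : mu lam h ≠ ⊤ := hxμ ▸ EReal.coe_ne_top x
  have hμx : (mu lam h).toReal = x := by rw [← hxμ, EReal.toReal_coe]
  have hκ : kappa lam h = supNonnegSubdiff h x := by
    rw [kappa, if_pos hμ, hμx]
    rfl
  have hhx := ne_top_of_biconj_gfun_ne_top hlam h0 hge hlsc hconv hGx
  have hτ : tau lam h ∈ subdiff h x := (hconv.mem_subdiff_iff_mem_subdiff_conj hge h0 hlsc hhx).2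
    (hμx ▸ toReal_mu_mem_subdiff hlam h0 hge hdom heven hμ)
  rw [subdiff_biconj_gfun_of_mu_le hlam h0 hge hlsc hconv hdom heven hx hxμ.ge hGx, hκ]
  ext d
  exact and_congr_right fun hτd =>
    mem_subdiff_iff_coe_le_supNonnegSubdiff hge hhx hτ (tau_mem hlam h0 hge hdom).1 hτd

/-- `d ∈ ∂h(x)` means `x ∈ ∂h*(d)`; as `μ ∈ ∂h*(τ)` and `μ < x`, monotonicity of `∂h*`
gives `τ ≤ d`. -/
lemma subdiff_biconj_gfun_of_mu_lt (hlam : 0 ≤ lam) (h0 : h 0 = 0) (hge : ∀ x, 0 ≤ h x)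
    (hlsc : LowerSemicontinuous h) (hconv : EConvexOn h) (hdom : ∃ x : ℝ, 0 < x ∧ h x ≠ ⊤)
    (heven : h.Even) {x : ℝ} (hx : 0 < x) (hμx : mu lam h < x)
    (hGx : conj (conj (gfun lam h)) x ≠ ⊤) :
    subdiff (conj (conj (gfun lam h))) x = subdiff h x := by
  have hμ : mu lam h ≠ ⊤ := hμx.ne_top
  have hMx : (mu lam h).toReal < x := by
    rwa [← EReal.coe_lt_coe_iff, coe_toReal_mu hlam h0 hge hdom heven hμ]
  have hhx := ne_top_of_biconj_gfun_ne_top hlam h0 hge hlsc hconv hGx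
  rw [subdiff_biconj_gfun_of_mu_le hlam h0 hge hlsc hconv hdom heven hx hμx.le hGx]
  ext d
  refine and_iff_right_of_imp fun hd => ?_
  have hψd := (hconv.mem_subdiff_iff_mem_subdiff_conj hge h0 hlsc hhx).1 hd
  have := sub_mul_sub_nonneg_of_mem_subdiff (conj_nonneg h0) hψd
    (toReal_mu_mem_subdiff hlam h0 hge hdom heven hμ)
    (ne_top_of_mem_subdiff hψd (y := 0) (by simp [conj_zero hge h0]))
  by_contra! hdτ
  nlinarith [mul_neg_of_pos_of_neg (sub_pos.2 hMx) (sub_neg.2 hdτ)]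

end Biconjugate

theorem subdiff_biconj_gfun (lam : ℝ) (h : ℝ → EReal) (hlam : 0 < lam)
    (h0 : h 0 = 0) (hge : ∀ x : ℝ, 0 ≤ h x)
    (hlsc : LowerSemicontinuous h) (hconv : EConvexOn h)
    (hdom : ∃ x : ℝ, 0 < x ∧ h x ≠ ⊤) (heven : ∀ x : ℝ, h (-x) = h x) :
    ∀ x : ℝ, conj (conj (gfun lam h)) x ≠ ⊤ →
      ((x = 0 →
          subdiff (conj (conj (gfun lam h))) x = Icc (-(tau lam h)) (tau lam h)) ∧
       (0 < |x| → ((|x| : ℝ) : EReal) < mu lam h →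
          subdiff (conj (conj (gfun lam h))) x = {Real.sign x * tau lam h}) ∧
       (((|x| : ℝ) : EReal) = mu lam h →
          subdiff (conj (conj (gfun lam h))) x =
            {d : ℝ | tau lam h ≤ Real.sign x * d ∧
              ((Real.sign x * d : ℝ) : EReal) ≤ kappa lam h}) ∧
       (mu lam h < ((|x| : ℝ) : EReal) →
          subdiff (conj (conj (gfun lam h))) x = subdiff h x)) := by
  intro x hGx
  have hG : (conj (conj (gfun lam h))).Even := even_conj (even_conj (even_gfun heven))
  have hGabs : conj (conj (gfun lam h)) |x| ≠ ⊤ := by rwa [hG.apply_abs]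
  have hsign : ∀ {f : ℝ → EReal}, f.Even → x ≠ 0 →
      subdiff f x = {d | Real.sign x * d ∈ subdiff f |x|} := fun hf hx =>
    ext fun d => mem_subdiff_iff_sign_mul_mem_abs hf hx
  refine ⟨fun hx => ?_, fun hx hxμ => ?_, fun hxμ => ?_, fun hμx => ?_⟩
  · subst hx
    exact subdiff_biconj_gfun_zero hlam.le h0 hge hdom heven hGx
  · rw [hsign hG (abs_pos.1 hx),
      subdiff_biconj_gfun_of_lt_mu hlam.le h0 hge hdom heven hx hxμ hGabs]
    ext d
    exact sign_mul_eq_iff (abs_pos.1 hx)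
  · have hx : 0 < |x| := (abs_nonneg x).lt_of_ne fun hx =>
      mu_ne_zero hlam h0 hge hdom heven (by rw [← hxμ, ← hx, EReal.coe_zero])
    rw [hsign hG (abs_pos.1 hx),
      subdiff_biconj_gfun_of_eq_mu hlam.le h0 hge hlsc hconv hdom heven hx hxμ hGabs]
    rfl
  · have hx : 0 < |x| := EReal.coe_pos.1 ((mu_nonneg hlam.le h0 hge hdom heven).trans_lt hμx)
    rw [hsign hG (abs_pos.1 hx),
      subdiff_biconj_gfun_of_mu_lt hlam.le h0 hge hlsc hconv hdom heven hx hμx hGabs,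
      ← hsign heven (abs_pos.1 hx)]
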